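/- arXiv:2602.07479 — 6 statements merged into one kernel-verified Lean document; each statement's English description precedes it below -/
import Mathlib

section
/- Let A ∈ ℝ^{r×n} and B ∈ ℝ^{m×r} be such that AAᵀ and BᵀB are positive definite, let G ∈ ℝ^{m×n}, set H := AAᵀ + BᵀB, and let X ∈ ℝ^{r×r} be the unique solution of the Sylvester equation H·X + X·H = (BᵀB)⁻¹BᵀGAᵀ + AGᵀB(BᵀB)⁻¹. Define J* := −(BᵀB)⁻¹BᵀG + X·A and K* := −(I_m − B(BᵀB)⁻¹Bᵀ)·G·Aᵀ(AAᵀ)⁻¹ − B·X. Then (J*, K*) satisfies the balance constraint J*Aᵀ + A(J*)ᵀ = (K*)ᵀB + BᵀK*, and for every pair (J, K) ∈ ℝ^{r×n} × ℝ^{m×r} satisfying JAᵀ + AJᵀ = KᵀB + BᵀK, one has ‖K*A + BJ* + G‖_F ≤ ‖KA + BJ + G‖_F; that is, (J*, K*) is a global minimizer of ‖KA + BJ + G‖_F² subject to the balance constraint. -/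
open Matrix

/-!
With `P = I - B (BᵀB)⁻¹ Bᵀ` and `Q = I - Aᵀ (AAᵀ)⁻¹ A`, we have `P B = 0` and `A Q = 0`, so every
residual `K A + B J + G` has the same compression `P (K A + B J + G) Q = P G Q`. Since `M ↦ P M Q`
is an orthogonal projection for the trace inner product, `‖K A + B J + G‖_F ≥ ‖P G Q‖_F`, and
`P G Q` is exactly the residual of `(J*, K*)`. The balance constraint for `(J*, K*)` reduces to the
Sylvester equation for `X` once `X` is known to be symmetric, which holds because `Xᵀ` solves the
same equation and `D ↦ H D + D H` is injective on skew-symmetric `D` when `H` is positive definite.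
-/

noncomputable def frobNorm {m n : ℕ} (A : Matrix (Fin m) (Fin n) ℝ) : ℝ :=
  Real.sqrt (∑ i, ∑ j, (A i j) ^ 2)

namespace Matrix

variable {m n r : Type*} [Fintype m] [Fintype n] [Fintype r]

section Projection

variable {R : Type*} [CommRing R] [DecidableEq r]

/-- The orthogonal projection onto the complement of the column space of `B`, when `Bᵀ B` is
invertible. -/
noncomputable def orthCompProj [DecidableEq m] (B : Matrix m r R) : Matrix m m R :=
  1 - B * (Bᵀ * B)⁻¹ * Bᵀ

lemma transpose_inv_transpose_mul_self (B : Matrix m r R) : (Bᵀ * B)⁻¹ᵀ = (Bᵀ * B)⁻¹ := by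
  rw [transpose_nonsing_inv, transpose_mul, transpose_transpose]

variable [DecidableEq m] {B : Matrix m r R}

lemma transpose_orthCompProj : (orthCompProj B)ᵀ = orthCompProj B := by
  simp only [orthCompProj, transpose_sub, transpose_one, transpose_mul, transpose_transpose,
    transpose_inv_transpose_mul_self, Matrix.mul_assoc]

lemma transpose_mul_orthCompProj (hB : IsUnit (Bᵀ * B).det) : Bᵀ * orthCompProj B = 0 := by
  rw [orthCompProj, Matrix.mul_sub, Matrix.mul_one, ← Matrix.mul_assoc, ← Matrix.mul_assoc,
    mul_nonsing_inv _ hB, Matrix.one_mul, sub_self]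

lemma orthCompProj_mul (hB : IsUnit (Bᵀ * B).det) : orthCompProj B * B = 0 := by
  rw [← transpose_transpose (orthCompProj B * B), transpose_mul, transpose_orthCompProj,
    transpose_mul_orthCompProj hB, transpose_zero]

lemma orthCompProj_mul_self (hB : IsUnit (Bᵀ * B).det) :
    orthCompProj B * orthCompProj B = orthCompProj B := by
  have h := transpose_mul_orthCompProj hB
  unfold orthCompProj at h ⊢
  rw [Matrix.sub_mul, Matrix.one_mul, Matrix.mul_assoc (B * _), h, Matrix.mul_zero, sub_zero]

lemma orthCompProj_mul_add_add_mul_orthCompProj {n : Type*} [Fintype n] [DecidableEq n]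
    {A : Matrix r n R} (hA : IsUnit (Aᵀᵀ * Aᵀ).det) (hB : IsUnit (Bᵀ * B).det)
    (K : Matrix m r R) (J : Matrix r n R) (G : Matrix m n R) :
    orthCompProj B * (K * A + B * J + G) * orthCompProj Aᵀ =
      orthCompProj B * G * orthCompProj Aᵀ := by
  have hAQ : A * orthCompProj Aᵀ = 0 := transpose_mul_orthCompProj hA
  rw [Matrix.mul_add, Matrix.mul_add, Matrix.add_mul, Matrix.add_mul, ← Matrix.mul_assoc _ B,
    orthCompProj_mul hB, Matrix.zero_mul, Matrix.zero_mul, Matrix.mul_assoc, Matrix.mul_assoc K,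
    hAQ, Matrix.mul_zero, Matrix.mul_zero, zero_add, zero_add]

/-- The balance constraint for `(J*, K*)`: `Bᵀ` kills the `orthCompProj B * N` part of `K*`, and
what remains is the Sylvester equation for the symmetric `X`. -/
lemma mul_transpose_add_eq_of_mul_add_mul_eq {n : Type*} [Fintype n] {A : Matrix r n R}
    (hB : IsUnit (Bᵀ * B).det) {G : Matrix m n R} {X : Matrix r r R} (hXt : Xᵀ = X)
    (hX : (A * Aᵀ + Bᵀ * B) * X + X * (A * Aᵀ + Bᵀ * B)
        = (Bᵀ * B)⁻¹ * Bᵀ * G * Aᵀ + A * Gᵀ * B * (Bᵀ * B)⁻¹) (N : Matrix m r R) :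
    (-((Bᵀ * B)⁻¹ * Bᵀ * G) + X * A) * Aᵀ + A * (-((Bᵀ * B)⁻¹ * Bᵀ * G) + X * A)ᵀ =
      (-(orthCompProj B * N) - B * X)ᵀ * B + Bᵀ * (-(orthCompProj B * N) - B * X) := by
  have hBK : Bᵀ * (-(orthCompProj B * N) - B * X) = -(Bᵀ * B * X) := by
    rw [Matrix.mul_sub, Matrix.mul_neg, ← Matrix.mul_assoc, transpose_mul_orthCompProj hB,
      Matrix.zero_mul, neg_zero, zero_sub, Matrix.mul_assoc]
  have hKB : (-(orthCompProj B * N) - B * X)ᵀ * B = -(X * (Bᵀ * B)) := by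
    rw [← transpose_transpose B, ← transpose_mul, transpose_transpose, hBK, transpose_neg,
      transpose_mul, hXt, transpose_mul, transpose_transpose]
  rw [hKB, hBK]
  simp only [transpose_add, transpose_neg, transpose_mul, transpose_transpose,
    transpose_inv_transpose_mul_self, hXt, Matrix.add_mul, Matrix.mul_add, Matrix.neg_mul,
    Matrix.mul_neg, Matrix.mul_assoc] at hX ⊢
  rw [← sub_eq_zero, ← sub_eq_zero.mpr hX]
  abel

end Projection

lemma trace_transpose_mul_self_nonneg (M : Matrix m n ℝ) : 0 ≤ (Mᵀ * M).trace := by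
  simpa [conjTranspose_eq_transpose_of_trivial] using
    (posSemidef_conjTranspose_mul_self M).trace_nonneg

/-- `M - P M Q` is orthogonal to `P M Q` for the trace inner product. -/
lemma trace_transpose_mul_self_le_of_isIdempotentElem {P : Matrix m m ℝ} {Q : Matrix n n ℝ}
    (hPt : Pᵀ = P) (hP : IsIdempotentElem P) (hQt : Qᵀ = Q) (hQ : IsIdempotentElem Q)
    (M : Matrix m n ℝ) : ((P * M * Q)ᵀ * (P * M * Q)).trace ≤ (Mᵀ * M).trace := by
  set S := P * M * Q
  set N := M - S
  have horth : (Sᵀ * N).trace = 0 := by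
    have hSM : Sᵀ * M = Q * (Mᵀ * P * M) := by
      simp only [S, transpose_mul, hPt, hQt, Matrix.mul_assoc]
    have hSS : Sᵀ * S = Q * (Mᵀ * P * M) * Q := by
      simp only [S, transpose_mul, hPt, hQt, Matrix.mul_assoc]
      rw [← Matrix.mul_assoc P P, hP.eq]
    rw [Matrix.mul_sub, trace_sub, hSM, hSS, trace_mul_comm (Q * (Mᵀ * P * M)) Q,
      ← Matrix.mul_assoc Q Q, hQ.eq, sub_self]
  have hM : M = S + N := (add_sub_cancel S M).symm
  have hNS : (Nᵀ * S).trace = (Sᵀ * N).trace := by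
    rw [← trace_transpose, transpose_mul, transpose_transpose]
  calc (Sᵀ * S).trace ≤ (Sᵀ * S).trace + (Nᵀ * N).trace :=
        le_add_of_nonneg_right (trace_transpose_mul_self_nonneg N)
    _ = (Mᵀ * M).trace := by
        rw [hM, transpose_add, Matrix.add_mul, Matrix.mul_add, Matrix.mul_add, trace_add, trace_add,
          trace_add, hNS, horth]
        ring

section Sylvester

variable {H : Matrix r r ℝ}

lemma PosDef.eq_zero_of_trace_transpose_mul_mul_eq_zero (hH : H.PosDef) {D : Matrix r n ℝ}
    (h : (Dᵀ * H * D).trace = 0) : D = 0 := by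
  classical
  have hDHD : Dᵀ * H * D = 0 := by
    simpa [conjTranspose_eq_transpose_of_trivial, h] using
      (hH.posSemidef.conjTranspose_mul_mul_same D).trace_eq_zero_iff
  have hDx : ∀ x, D *ᵥ x = 0 := fun x ↦ by
    by_contra hx
    have hpos := hH.dotProduct_mulVec_pos hx
    simp only [star_trivial, dotProduct_mulVec, vecMul_mulVec, vecMul_vecMul, hDHD, vecMul_zero,
      zero_dotProduct, lt_self_iff_false] at hpos
  exact ext_of_mulVec_single fun i ↦ by rw [hDx, zero_mulVec]

lemma PosDef.eq_zero_of_mul_add_mul_eq_zero (hH : H.PosDef) {D : Matrix r r ℝ} (hD : Dᵀ = -D)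
    (h : H * D + D * H = 0) : D = 0 := by
  refine hH.eq_zero_of_trace_transpose_mul_mul_eq_zero ?_
  have hsum : (Dᵀ * (H * D + D * H)).trace = 0 := by rw [h, Matrix.mul_zero, trace_zero]
  have hswap : (Dᵀ * (D * H)).trace = (Dᵀ * H * D).trace := by
    rw [hD, Matrix.neg_mul, Matrix.neg_mul, Matrix.neg_mul, trace_neg, trace_neg,
      trace_mul_comm D, Matrix.mul_assoc]
  rw [Matrix.mul_add, trace_add, hswap, ← Matrix.mul_assoc] at hsum
  linarith

lemma PosDef.transpose_eq_of_mul_add_mul_eq (hH : H.PosDef) {C X : Matrix r r ℝ} (hC : Cᵀ = C)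
    (hX : H * X + X * H = C) : Xᵀ = X := by
  have hHt : Hᵀ = H := by
    simpa [conjTranspose_eq_transpose_of_trivial] using hH.isHermitian.eq
  have hXt : H * Xᵀ + Xᵀ * H = C := by
    rw [← hC, ← hX, transpose_add, transpose_mul, transpose_mul, hHt, add_comm]
  refine sub_eq_zero.mp (hH.eq_zero_of_mul_add_mul_eq_zero ?_ ?_)
  · rw [transpose_sub, transpose_transpose, neg_sub]
  · rw [Matrix.mul_sub, Matrix.sub_mul, sub_add_sub_comm, hXt, hX, sub_self]

end Sylvester

end Matrix

lemma frobNorm_eq_sqrt_trace {m n : ℕ} (M : Matrix (Fin m) (Fin n) ℝ) :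
    frobNorm M = √(Mᵀ * M).trace := by
  rw [frobNorm, trace, Finset.sum_comm]
  simp [mul_apply, sq]

/-- The pair `(J*, K*)` built from the solution `X` of the Sylvester equation
satisfies the balance constraint and globally minimizes
`‖K A + B J + G‖_F` among balanced pairs `(J, K)`. -/
theorem odelora_constrained_minimizer {m n r : ℕ}
    (A : Matrix (Fin r) (Fin n) ℝ) (B : Matrix (Fin m) (Fin r) ℝ)
    (hA : (A * Aᵀ).PosDef) (hB : (Bᵀ * B).PosDef)
    (G : Matrix (Fin m) (Fin n) ℝ)
    (X : Matrix (Fin r) (Fin r) ℝ)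
    (hX : (A * Aᵀ + Bᵀ * B) * X + X * (A * Aᵀ + Bᵀ * B)
        = (Bᵀ * B)⁻¹ * Bᵀ * G * Aᵀ + A * Gᵀ * B * (Bᵀ * B)⁻¹) :
    let Js : Matrix (Fin r) (Fin n) ℝ := -((Bᵀ * B)⁻¹ * Bᵀ * G) + X * A
    let Ks : Matrix (Fin m) (Fin r) ℝ :=
      -(((1 : Matrix (Fin m) (Fin m) ℝ) - B * (Bᵀ * B)⁻¹ * Bᵀ) * G * Aᵀ * (A * Aᵀ)⁻¹) - B * X
    (Js * Aᵀ + A * Jsᵀ = Ksᵀ * B + Bᵀ * Ks) ∧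
      ∀ (J : Matrix (Fin r) (Fin n) ℝ) (K : Matrix (Fin m) (Fin r) ℝ),
        J * Aᵀ + A * Jᵀ = Kᵀ * B + Bᵀ * K →
        frobNorm (Ks * A + B * Js + G) ≤ frobNorm (K * A + B * J + G) := by
  intro Js Ks
  have hAu : IsUnit (Aᵀᵀ * Aᵀ).det := (isUnit_iff_isUnit_det _).mp hA.isUnit
  have hBu : IsUnit (Bᵀ * B).det := (isUnit_iff_isUnit_det _).mp hB.isUnit
  have hXt : Xᵀ = X := (hA.add hB).transpose_eq_of_mul_add_mul_eq (by
    simp only [transpose_add, transpose_mul, transpose_transpose, transpose_inv_transpose_mul_self,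
      Matrix.mul_assoc]
    exact add_comm _ _) hX
  have hKs : Ks = -(orthCompProj B * (G * Aᵀ * (A * Aᵀ)⁻¹)) - B * X := by
    simp only [Ks, orthCompProj, Matrix.mul_assoc]
  refine ⟨hKs ▸ mul_transpose_add_eq_of_mul_add_mul_eq hBu hXt hX _, fun J K _ ↦ ?_⟩
  have hres : Ks * A + B * Js + G = orthCompProj B * G * orthCompProj Aᵀ := by
    simp only [Ks, Js, orthCompProj, transpose_transpose, Matrix.sub_mul, Matrix.mul_sub,
      Matrix.mul_add, Matrix.neg_mul, Matrix.mul_neg, Matrix.one_mul, Matrix.mul_one,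
      Matrix.mul_assoc]
    abel
  rw [frobNorm_eq_sqrt_trace, frobNorm_eq_sqrt_trace, hres,
    ← orthCompProj_mul_add_add_mul_orthCompProj hAu hBu K J G]
  exact Real.sqrt_le_sqrt <| trace_transpose_mul_self_le_of_isIdempotentElem
    transpose_orthCompProj (orthCompProj_mul_self hBu) transpose_orthCompProj
    (orthCompProj_mul_self hAu) _
end

section
/- Let A ∈ ℝ^{r×n} and B ∈ ℝ^{m×r} be such that AAᵀ and BᵀB are positive definite, let G ∈ ℝ^{m×n} and let X ∈ ℝ^{r×r} be an arbitrary matrix. Define J* := −(BᵀB)⁻¹BᵀG + X·A and K* := −P_B^null·G·Aᵀ(AAᵀ)⁻¹ − B·X. Then K*·A + B·J* = −G + P_B^null·G·P_A^null, where P_A^null := I_n − Aᵀ(AAᵀ)⁻¹A and P_B^null := I_m − B(BᵀB)⁻¹Bᵀ. -/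
open Matrix

/-- For any choice of the gauge matrix `X`, the pair `(J*, K*)` induces the
full-matrix dynamics `K* A + B J* = -G + P_B^null G P_A^null`. -/
theorem odelora_full_dynamics {m n r : ℕ}
    (A : Matrix (Fin r) (Fin n) ℝ) (B : Matrix (Fin m) (Fin r) ℝ)
    (hA : (A * Aᵀ).PosDef) (hB : (Bᵀ * B).PosDef)
    (G : Matrix (Fin m) (Fin n) ℝ) (X : Matrix (Fin r) (Fin r) ℝ) :
    let Js : Matrix (Fin r) (Fin n) ℝ := -((Bᵀ * B)⁻¹ * Bᵀ * G) + X * A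
    let PBnull : Matrix (Fin m) (Fin m) ℝ := 1 - B * (Bᵀ * B)⁻¹ * Bᵀ
    let PAnull : Matrix (Fin n) (Fin n) ℝ := 1 - Aᵀ * (A * Aᵀ)⁻¹ * A
    let Ks : Matrix (Fin m) (Fin r) ℝ := -(PBnull * G * Aᵀ * (A * Aᵀ)⁻¹) - B * X
    Ks * A + B * Js = -G + PBnull * G * PAnull := by
  intro Js PBnull PAnull Ks
  simp only [Js, PBnull, PAnull, Ks, Matrix.mul_add, Matrix.add_mul, Matrix.sub_mul, Matrix.mul_sub, Matrix.neg_mul, Matrix.mul_neg, Matrix.one_mul, Matrix.mul_one, Matrix.mul_assoc]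
  abel
end

section
/- Let L: ℝ^{m×n} → ℝ be differentiable and μ-strongly convex (μ > 0) with minimizer W*. Fix W_pt ∈ ℝ^{m×n} and ε ∈ [0,1). Let A: [0,∞) → ℝ^{r×n} and B: [0,∞) → ℝ^{m×r} be differentiable curves with A(t)A(t)ᵀ and B(t)ᵀB(t) positive definite for all t ≥ 0, set W(t) := W_pt + B(t)A(t), and suppose that for all t ≥ 0: (i) the derivative of W satisfies W′(t) = −∇L(W(t)) + P_{B(t)}^null · ∇L(W(t)) · P_{A(t)}^null, and (ii) ⟨P_{B(t)}^null · ∇L(W(t)) · P_{A(t)}^null, W(t) − W*⟩ ≤ ε · ⟨∇L(W(t)), W(t) − W*⟩. Then for all t ≥ 0, ‖W(t) − W*‖_F² ≤ exp(−μ(1−ε)t) · ‖W(0) − W*‖_F². -/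
open Matrix

/-- Frobenius (trace) inner product of two real matrices. -/
def frobInner {m n : ℕ} (A B : Matrix (Fin m) (Fin n) ℝ) : ℝ :=
  ∑ i, ∑ j, A i j * B i j

section Frobenius

variable {m n : ℕ}

theorem frobNorm_sq (A : Matrix (Fin m) (Fin n) ℝ) : frobNorm A ^ 2 = ∑ i, ∑ j, A i j ^ 2 :=
  Real.sq_sqrt (by positivity)

theorem frobNorm_neg (A : Matrix (Fin m) (Fin n) ℝ) : frobNorm (-A) = frobNorm A := by
  simp [frobNorm]

theorem frobInner_neg_right (A B : Matrix (Fin m) (Fin n) ℝ) :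
    frobInner A (-B) = -frobInner A B := by
  simp [frobInner]

theorem frobInner_neg_add_left (A B C : Matrix (Fin m) (Fin n) ℝ) :
    frobInner (-A + B) C = -frobInner A C + frobInner B C := by
  simp only [frobInner, Matrix.add_apply, Matrix.neg_apply, ← Finset.sum_neg_distrib,
    ← Finset.sum_add_distrib]
  exact Finset.sum_congr rfl fun i _ => Finset.sum_congr rfl fun j _ => by ring

theorem hasDerivWithinAt_frobNorm_sq {X : ℝ → Matrix (Fin m) (Fin n) ℝ}
    {X' : Matrix (Fin m) (Fin n) ℝ} {s : Set ℝ} {t : ℝ}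
    (hX : ∀ i j, HasDerivWithinAt (fun τ => X τ i j) (X' i j) s t) :
    HasDerivWithinAt (fun τ => frobNorm (X τ) ^ 2) (2 * frobInner X' (X t)) s t := by
  simp only [frobNorm_sq, frobInner, Finset.mul_sum]
  refine HasDerivWithinAt.fun_sum fun i _ => HasDerivWithinAt.fun_sum fun j _ => ?_
  exact ((hX i j).fun_pow 2).congr_deriv (by push_cast; ring)

end Frobenius

open Set

theorem le_exp_mul_of_hasDerivWithinAt_le {f f' : ℝ → ℝ} {K : ℝ}
    (hf : ∀ s ≥ 0, HasDerivWithinAt f (f' s) (Ici 0) s) (bound : ∀ s ≥ 0, f' s ≤ K * f s) :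
    ∀ t ≥ 0, f t ≤ Real.exp (K * t) * f 0 := by
  intro t ht
  have hcont : ContinuousOn f (Icc 0 t) := fun s hs =>
    ((hf s hs.1).continuousWithinAt).mono Icc_subset_Ici_self
  have := le_gronwallBound_of_liminf_deriv_right_le (K := K) (ε := 0) hcont
    (fun s hs _ hr => ((hf s hs.1).mono (Ici_subset_Ici.2 hs.1)).liminf_right_slope_le hr)
    le_rfl (fun s hs => by simpa using bound s hs.1) t ⟨ht, le_rfl⟩
  rwa [gronwallBound_ε0, sub_zero, mul_comm] at this

theorem mul_frobNorm_sq_le_frobInner_of_strongConvex {m n : ℕ}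
    {L : Matrix (Fin m) (Fin n) ℝ → ℝ} {gradL : Matrix (Fin m) (Fin n) ℝ → Matrix (Fin m) (Fin n) ℝ}
    {μ : ℝ} {Wstar : Matrix (Fin m) (Fin n) ℝ}
    (hsc : ∀ W W' : Matrix (Fin m) (Fin n) ℝ,
      L W' + frobInner (gradL W') (W - W') + μ / 2 * frobNorm (W - W') ^ 2 ≤ L W)
    (hmin : ∀ W, L Wstar ≤ L W) (W : Matrix (Fin m) (Fin n) ℝ) :
    μ / 2 * frobNorm (W - Wstar) ^ 2 ≤ frobInner (gradL W) (W - Wstar) := by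
  have h := hsc Wstar W
  rw [← neg_sub, frobInner_neg_right, frobNorm_neg] at h
  linarith [hmin W]

theorem two_mul_frobInner_neg_add_le {m n : ℕ} {G P X : Matrix (Fin m) (Fin n) ℝ} {μ ε : ℝ}
    (hε : ε < 1) (hP : frobInner P X ≤ ε * frobInner G X)
    (hG : μ / 2 * frobNorm X ^ 2 ≤ frobInner G X) :
    2 * frobInner (-G + P) X ≤ -(μ * (1 - ε)) * frobNorm X ^ 2 := by
  rw [frobInner_neg_add_left]
  nlinarith

theorem odelora_flow_linear_convergence_general {m n r : ℕ}
    (L : Matrix (Fin m) (Fin n) ℝ → ℝ)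
    (gradL : Matrix (Fin m) (Fin n) ℝ → Matrix (Fin m) (Fin n) ℝ)
    (μ : ℝ)
    -- μ-strong convexity of `L`
    (hsc : ∀ W W' : Matrix (Fin m) (Fin n) ℝ,
      L W' + frobInner (gradL W') (W - W') + μ / 2 * frobNorm (W - W') ^ 2 ≤ L W)
    (Wstar : Matrix (Fin m) (Fin n) ℝ) (hmin : ∀ W, L Wstar ≤ L W)
    (ε : ℝ) (hε1 : ε < 1)
    (A : ℝ → Matrix (Fin r) (Fin n) ℝ) (B : ℝ → Matrix (Fin m) (Fin r) ℝ)
    (W : ℝ → Matrix (Fin m) (Fin n) ℝ)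
    -- (i) the ODELoRA dynamics of the full matrix
    (hode : ∀ t ≥ (0:ℝ), ∀ i j,
      HasDerivWithinAt (fun s => W s i j)
        ((-(gradL (W t)) +
          ((1 : Matrix (Fin m) (Fin m) ℝ) - B t * ((B t)ᵀ * B t)⁻¹ * (B t)ᵀ) *
            gradL (W t) *
          ((1 : Matrix (Fin n) (Fin n) ℝ) - (A t)ᵀ * (A t * (A t)ᵀ)⁻¹ * A t)) i j)
        (Set.Ici (0:ℝ)) t)
    -- (ii) the ε-dominance condition
    (hcond : ∀ t ≥ (0:ℝ),
      frobInner
        ((((1 : Matrix (Fin m) (Fin m) ℝ) - B t * ((B t)ᵀ * B t)⁻¹ * (B t)ᵀ) *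
            gradL (W t) *
          ((1 : Matrix (Fin n) (Fin n) ℝ) - (A t)ᵀ * (A t * (A t)ᵀ)⁻¹ * A t)))
        (W t - Wstar)
        ≤ ε * frobInner (gradL (W t)) (W t - Wstar)) :
    ∀ t ≥ (0:ℝ),
      frobNorm (W t - Wstar) ^ 2
        ≤ Real.exp (-(μ * (1 - ε) * t)) * frobNorm (W 0 - Wstar) ^ 2 := by
  intro t ht
  rw [← neg_mul]
  exact le_exp_mul_of_hasDerivWithinAt_le
    (fun s hs => hasDerivWithinAt_frobNorm_sq fun i j => (hode s hs i j).sub_const (Wstar i j))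
    (fun s hs => two_mul_frobInner_neg_add_le hε1 (hcond s hs)
      (mul_frobNorm_sq_le_frobInner_of_strongConvex hsc hmin (W s)))
    t ht

/-- Linear convergence of the continuous-time ODELoRA flow under μ-strong
convexity and the ε-dominance condition on the projected gradient term. -/
theorem odelora_flow_linear_convergence {m n r : ℕ}
    (L : Matrix (Fin m) (Fin n) ℝ → ℝ)
    (gradL : Matrix (Fin m) (Fin n) ℝ → Matrix (Fin m) (Fin n) ℝ)
    -- `gradL` is the gradient of the differentiable function `L`
    (hgrad : ∀ (W Δ : Matrix (Fin m) (Fin n) ℝ),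
      HasDerivAt (fun t : ℝ => L (W + t • Δ)) (frobInner (gradL W) Δ) 0)
    (μ : ℝ) (hμ : 0 < μ)
    -- μ-strong convexity of `L`
    (hsc : ∀ W W' : Matrix (Fin m) (Fin n) ℝ,
      L W' + frobInner (gradL W') (W - W') + μ / 2 * frobNorm (W - W') ^ 2 ≤ L W)
    (Wstar : Matrix (Fin m) (Fin n) ℝ) (hmin : ∀ W, L Wstar ≤ L W)
    (Wpt : Matrix (Fin m) (Fin n) ℝ)
    (ε : ℝ) (hε0 : 0 ≤ ε) (hε1 : ε < 1)
    (A : ℝ → Matrix (Fin r) (Fin n) ℝ) (B : ℝ → Matrix (Fin m) (Fin r) ℝ)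
    -- the curves are differentiable on [0, ∞)
    (hdiffA : ∀ t ≥ (0:ℝ), ∀ i j,
      DifferentiableWithinAt ℝ (fun s => A s i j) (Set.Ici (0:ℝ)) t)
    (hdiffB : ∀ t ≥ (0:ℝ), ∀ i j,
      DifferentiableWithinAt ℝ (fun s => B s i j) (Set.Ici (0:ℝ)) t)
    (hposA : ∀ t ≥ (0:ℝ), (A t * (A t)ᵀ).PosDef)
    (hposB : ∀ t ≥ (0:ℝ), ((B t)ᵀ * B t).PosDef)
    (W : ℝ → Matrix (Fin m) (Fin n) ℝ)
    (hW : ∀ t, W t = Wpt + B t * A t)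
    -- (i) the ODELoRA dynamics of the full matrix
    (hode : ∀ t ≥ (0:ℝ), ∀ i j,
      HasDerivWithinAt (fun s => W s i j)
        ((-(gradL (W t)) +
          ((1 : Matrix (Fin m) (Fin m) ℝ) - B t * ((B t)ᵀ * B t)⁻¹ * (B t)ᵀ) *
            gradL (W t) *
          ((1 : Matrix (Fin n) (Fin n) ℝ) - (A t)ᵀ * (A t * (A t)ᵀ)⁻¹ * A t)) i j)
        (Set.Ici (0:ℝ)) t)
    -- (ii) the ε-dominance condition
    (hcond : ∀ t ≥ (0:ℝ),
      frobInner
        ((((1 : Matrix (Fin m) (Fin m) ℝ) - B t * ((B t)ᵀ * B t)⁻¹ * (B t)ᵀ) *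
            gradL (W t) *
          ((1 : Matrix (Fin n) (Fin n) ℝ) - (A t)ᵀ * (A t * (A t)ᵀ)⁻¹ * A t)))
        (W t - Wstar)
        ≤ ε * frobInner (gradL (W t)) (W t - Wstar)) :
    ∀ t ≥ (0:ℝ),
      frobNorm (W t - Wstar) ^ 2
        ≤ Real.exp (-(μ * (1 - ε) * t)) * frobNorm (W 0 - Wstar) ^ 2 :=
  odelora_flow_linear_convergence_general L gradL μ hsc Wstar hmin ε hε1 A B W hode hcond
end

section
/- Let L: ℝ^{m×n} → ℝ be differentiable and M-smooth, let ε ∈ [0,1), C₁ ≥ 0, h > 0, and let W, W′ ∈ ℝ^{m×n}, R, E ∈ ℝ^{m×n} satisfy W′ = W − h∇L(W) + hR + E with ⟨R, ∇L(W)⟩ ≤ ε‖∇L(W)‖_F², ‖R‖_F ≤ ‖∇L(W)‖_F, and ‖E‖_F ≤ C₁h²‖∇L(W)‖_F. Then L(W′) ≤ L(W) − h(1−ε)‖∇L(W)‖_F² + (C₁h² + (M/2)(2h + C₁h²)²)‖∇L(W)‖_F². -/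
/-!
Flattening matrices turns `frobNorm` and `frobInner` into the norm and inner product of a
Euclidean space, where the argument is the classical one. The descent lemma
`f (x + v) ≤ f x + ⟪∇f x, v⟫ + M/2 ‖v‖²` holds because
`t ↦ f (x + t v) - t ⟪∇f x, v⟫ - M/2 t² ‖v‖²` has derivative
`⟪∇f (x + t v) - ∇f x, v⟫ - M t ‖v‖² ≤ 0` on `[0, 1]`. For the step `v = -h ∇f x + h r + e`,
the hypothesis on `r` and Cauchy–Schwarz for `e` bound `⟪∇f x, v⟫`, and the triangle inequality
gives `‖v‖ ≤ (2h + C₁h²) ‖∇f x‖`.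
-/

open Matrix

open scoped RealInnerProductSpace

theorem nonneg_of_norm_sub_le_mul {α β : Type*} [NormedAddCommGroup α] [Nontrivial α]
    [SeminormedAddCommGroup β] {g : α → β} {M : ℝ}
    (hg : ∀ x y : α, ‖g x - g y‖ ≤ M * ‖x - y‖) : 0 ≤ M := by
  obtain ⟨v, hv⟩ := exists_ne (0 : α)
  have hpos : 0 < ‖v - 0‖ := by simpa using hv
  exact nonneg_of_mul_nonneg_left ((norm_nonneg _).trans (hg v 0)) hpos

section InnerProductSpace

variable {E : Type*} [NormedAddCommGroup E] [InnerProductSpace ℝ E]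
  {f : E → ℝ} {f' : E → E} {M : ℝ}

theorem hasDerivAt_comp_add_smul
    (hgrad : ∀ x v : E, HasDerivAt (fun t : ℝ => f (x + t • v)) ⟪f' x, v⟫ 0)
    (x v : E) (t : ℝ) :
    HasDerivAt (fun s : ℝ => f (x + s • v)) ⟪f' (x + t • v), v⟫ t := by
  have hshift : HasDerivAt (fun s : ℝ => f (x + t • v + s • v)) ⟪f' (x + t • v), v⟫ (t - t) := by
    rw [sub_self]
    exact hgrad (x + t • v) v
  have hline : (fun s : ℝ => f (x + s • v)) = fun s => f (x + t • v + (s - t) • v) := by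
    funext s
    congr 1
    module
  rw [hline]
  exact hshift.comp_sub_const t t

theorem le_add_inner_add_half_mul_norm_sq
    (hgrad : ∀ x v : E, HasDerivAt (fun t : ℝ => f (x + t • v)) ⟪f' x, v⟫ 0)
    (hsmooth : ∀ x y : E, ‖f' x - f' y‖ ≤ M * ‖x - y‖) (x v : E) :
    f (x + v) ≤ f x + ⟪f' x, v⟫ + M / 2 * ‖v‖ ^ 2 := by
  set φ : ℝ → ℝ := fun t => f (x + t • v) - t * ⟪f' x, v⟫ - M / 2 * t ^ 2 * ‖v‖ ^ 2
  have hφ : ∀ t : ℝ, HasDerivAt φ (⟪f' (x + t • v) - f' x, v⟫ - M * t * ‖v‖ ^ 2) t := by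
    intro t
    have hquad := ((hasDerivAt_pow 2 t).const_mul (M / 2)).mul_const (‖v‖ ^ 2)
    refine (((hasDerivAt_comp_add_smul hgrad x v t).sub
      ((hasDerivAt_id t).mul_const ⟪f' x, v⟫)).sub hquad).congr_deriv ?_
    rw [inner_sub_left]
    simp only [Nat.cast_ofNat]
    ring
  have hφ_anti : AntitoneOn φ (Set.Icc 0 1) := by
    refine antitoneOn_of_hasDerivWithinAt_nonpos (convex_Icc 0 1)
      (fun t _ => (hφ t).continuousAt.continuousWithinAt)
      (fun t _ => (hφ t).hasDerivWithinAt) fun t ht => ?_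
    rw [interior_Icc] at ht
    have hlip : ‖f' (x + t • v) - f' x‖ ≤ M * t * ‖v‖ := by
      simpa [norm_smul, abs_of_pos ht.1, mul_assoc] using hsmooth (x + t • v) x
    have hcs := real_inner_le_norm (f' (x + t • v) - f' x) v
    nlinarith [mul_le_mul_of_nonneg_right hlip (norm_nonneg v)]
  have h01 := hφ_anti (Set.left_mem_Icc.2 zero_le_one) (Set.right_mem_Icc.2 zero_le_one)
    zero_le_one
  simp only [φ, one_smul, zero_smul, add_zero] at h01
  linarith

theorem perturbed_gradient_step_le
    (hgrad : ∀ x v : E, HasDerivAt (fun t : ℝ => f (x + t • v)) ⟪f' x, v⟫ 0)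
    (hsmooth : ∀ x y : E, ‖f' x - f' y‖ ≤ M * ‖x - y‖)
    {ε C₁ h : ℝ} (hh : 0 ≤ h) {x r e : E}
    (hr : ⟪r, f' x⟫ ≤ ε * ‖f' x‖ ^ 2) (hr_norm : ‖r‖ ≤ ‖f' x‖)
    (he : ‖e‖ ≤ C₁ * h ^ 2 * ‖f' x‖) :
    f (x - h • f' x + h • r + e) ≤ f x - h * (1 - ε) * ‖f' x‖ ^ 2
      + (C₁ * h ^ 2 + M / 2 * (2 * h + C₁ * h ^ 2) ^ 2) * ‖f' x‖ ^ 2 := by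
  -- `M ≥ 0` can only be read off `hsmooth` in a nontrivial space
  rcases subsingleton_or_nontrivial E with hE | hE
  · simp [Subsingleton.elim (f' x) 0, Subsingleton.elim r 0, Subsingleton.elim e 0]
  set g := f' x
  set v := -h • g + h • r + e
  have hinner : ⟪g, v⟫ ≤ -h * ‖g‖ ^ 2 + h * (ε * ‖g‖ ^ 2) + ‖g‖ * (C₁ * h ^ 2 * ‖g‖) := by
    rw [inner_add_right, inner_add_right, real_inner_smul_right, real_inner_smul_right,
      real_inner_self_eq_norm_sq, real_inner_comm]
    gcongr
    exact (real_inner_le_norm g e).trans (by gcongr)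
  have hnorm : ‖v‖ ≤ (2 * h + C₁ * h ^ 2) * ‖g‖ := by
    calc ‖v‖ ≤ ‖-h • g‖ + ‖h • r‖ + ‖e‖ := norm_add₃_le
      _ ≤ h * ‖g‖ + h * ‖g‖ + C₁ * h ^ 2 * ‖g‖ := by
          rw [norm_smul, norm_smul, norm_neg, Real.norm_of_nonneg hh]
          gcongr
      _ = (2 * h + C₁ * h ^ 2) * ‖g‖ := by ring
  have hdescent := le_add_inner_add_half_mul_norm_sq hgrad hsmooth x v
  have hM := nonneg_of_norm_sub_le_mul hsmooth
  have hquad : M / 2 * ‖v‖ ^ 2 ≤ M / 2 * ((2 * h + C₁ * h ^ 2) * ‖g‖) ^ 2 := by gcongr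
  rw [show x - h • g + h • r + e = x + v by module]
  linarith

end InnerProductSpace

noncomputable def Matrix.toEuclidean (ι κ : Type*) :
    Matrix ι κ ℝ ≃ₗ[ℝ] EuclideanSpace ℝ (ι × κ) :=
  (LinearEquiv.curry ℝ ℝ ι κ).symm ≪≫ₗ (WithLp.linearEquiv 2 ℝ (ι × κ → ℝ)).symm

theorem Matrix.toEuclidean_apply {ι κ : Type*} (A : Matrix ι κ ℝ) (p : ι × κ) :
    Matrix.toEuclidean ι κ A p = A p.1 p.2 := rfl

theorem frobNorm_eq_norm_toEuclidean {m n : ℕ} (A : Matrix (Fin m) (Fin n) ℝ) :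
    frobNorm A = ‖Matrix.toEuclidean _ _ A‖ := by
  simp [frobNorm, EuclideanSpace.norm_eq, Fintype.sum_prod_type, Matrix.toEuclidean_apply]

theorem frobInner_eq_inner_toEuclidean {m n : ℕ} (A B : Matrix (Fin m) (Fin n) ℝ) :
    frobInner A B = ⟪Matrix.toEuclidean _ _ A, Matrix.toEuclidean _ _ B⟫ := by
  simp [frobInner, PiLp.inner_apply, Fintype.sum_prod_type, Matrix.toEuclidean_apply, mul_comm]

theorem perturbed_descent_step_general {m n : ℕ}
    (L : Matrix (Fin m) (Fin n) ℝ → ℝ)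
    (gradL : Matrix (Fin m) (Fin n) ℝ → Matrix (Fin m) (Fin n) ℝ)
    -- `gradL` is the gradient of the differentiable function `L`
    (hgrad : ∀ (W Δ : Matrix (Fin m) (Fin n) ℝ),
      HasDerivAt (fun t : ℝ => L (W + t • Δ)) (frobInner (gradL W) Δ) 0)
    (M : ℝ)
    -- M-smoothness of `L`
    (hsmooth : ∀ W W' : Matrix (Fin m) (Fin n) ℝ,
      frobNorm (gradL W - gradL W') ≤ M * frobNorm (W - W'))
    (ε : ℝ)
    (C₁ : ℝ) (h : ℝ) (hh : 0 < h)
    (W W' R E : Matrix (Fin m) (Fin n) ℝ)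
    (hupd : W' = W - h • gradL W + h • R + E)
    (hR : frobInner R (gradL W) ≤ ε * frobNorm (gradL W) ^ 2)
    (hRnorm : frobNorm R ≤ frobNorm (gradL W))
    (hE : frobNorm E ≤ C₁ * h ^ 2 * frobNorm (gradL W)) :
    L W' ≤ L W - h * (1 - ε) * frobNorm (gradL W) ^ 2
      + (C₁ * h ^ 2 + M / 2 * (2 * h + C₁ * h ^ 2) ^ 2) * frobNorm (gradL W) ^ 2 := by
  simp only [frobNorm_eq_norm_toEuclidean, frobInner_eq_inner_toEuclidean] at *
  set T := Matrix.toEuclidean (Fin m) (Fin n)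
  have hgrad' : ∀ x v, HasDerivAt (fun t : ℝ => L (T.symm (x + t • v)))
      ⟪T (gradL (T.symm x)), v⟫ 0 := by
    intro x v
    simpa using hgrad (T.symm x) (T.symm v)
  have hsmooth' : ∀ x y, ‖T (gradL (T.symm x)) - T (gradL (T.symm y))‖ ≤ M * ‖x - y‖ := by
    intro x y
    simpa using hsmooth (T.symm x) (T.symm y)
  have hstep := perturbed_gradient_step_le (f := L ∘ T.symm) hgrad' hsmooth' hh.le
    (x := T W) (r := T R) (e := T E) (by simpa using hR) (by simpa using hRnorm)
    (by simpa using hE)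
  simpa [hupd] using hstep

/-- One-step descent inequality for a perturbed gradient step of an
M-smooth differentiable function. -/
theorem perturbed_descent_step {m n : ℕ}
    (L : Matrix (Fin m) (Fin n) ℝ → ℝ)
    (gradL : Matrix (Fin m) (Fin n) ℝ → Matrix (Fin m) (Fin n) ℝ)
    -- `gradL` is the gradient of the differentiable function `L`
    (hgrad : ∀ (W Δ : Matrix (Fin m) (Fin n) ℝ),
      HasDerivAt (fun t : ℝ => L (W + t • Δ)) (frobInner (gradL W) Δ) 0)
    (M : ℝ)
    -- M-smoothness of `L`
    (hsmooth : ∀ W W' : Matrix (Fin m) (Fin n) ℝ,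
      frobNorm (gradL W - gradL W') ≤ M * frobNorm (W - W'))
    (ε : ℝ) (hε0 : 0 ≤ ε) (hε1 : ε < 1)
    (C₁ : ℝ) (hC₁ : 0 ≤ C₁) (h : ℝ) (hh : 0 < h)
    (W W' R E : Matrix (Fin m) (Fin n) ℝ)
    (hupd : W' = W - h • gradL W + h • R + E)
    (hR : frobInner R (gradL W) ≤ ε * frobNorm (gradL W) ^ 2)
    (hRnorm : frobNorm R ≤ frobNorm (gradL W))
    (hE : frobNorm E ≤ C₁ * h ^ 2 * frobNorm (gradL W)) :
    L W' ≤ L W - h * (1 - ε) * frobNorm (gradL W) ^ 2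
      + (C₁ * h ^ 2 + M / 2 * (2 * h + C₁ * h ^ 2) ^ 2) * frobNorm (gradL W) ^ 2 :=
  perturbed_descent_step_general L gradL hgrad M hsmooth ε C₁ h hh W W' R E hupd hR hRnorm hE
end

section
/- Let L: ℝ^{m×n} → ℝ be differentiable, μ-strongly convex (μ > 0) and M-smooth, with minimizer W* and minimum value L* = L(W*). Let ε ∈ [0,1), C₁ ≥ 0, and let the step size h > 0 satisfy C₁h² + (M/2)(2h + C₁h²)² ≤ (h(1−ε))/2 and (1−ε)μh ≤ 1. Suppose the sequence (W_t)_{t∈ℕ} in ℝ^{m×n} satisfies, for every t, W_{t+1} = W_t − h∇L(W_t) + hR_t + E_t for some matrices R_t, E_t with ⟨R_t, ∇L(W_t)⟩ ≤ ε‖∇L(W_t)‖_F², ‖R_t‖_F ≤ ‖∇L(W_t)‖_F, and ‖E_t‖_F ≤ C₁h²‖∇L(W_t)‖_F. Then for all t ∈ ℕ, L(W_t) − L* ≤ (1 − (1−ε)μh)^t · (L(W_0) − L*). -/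
/-!
Plugging the perturbed step `d = -h ∇L(W) + h R + E` into the descent lemma of an `M`-smooth function:
the conditions on `R`, `E` bound `⟪∇L(W), d⟫` by `-(1 - ε) h ‖∇L(W)‖²` up to the error
`C₁ h² ‖∇L(W)‖²` and `‖d‖` by `(2h + C₁h²) ‖∇L(W)‖`, so the first step-size condition gives the
sufficient decrease `L(W + d) ≤ L(W) - h(1 - ε)/2 ‖∇L(W)‖²`. The Polyak–Łojasiewicz inequality
turns this into the contraction `L(W + d) - L* ≤ (1 - (1 - ε)μh)(L(W) - L*)`, and the second
condition makes the factor nonnegative, so the contractions can be iterated. The argument runs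
in any real inner product space; flattening matrices into `EuclideanSpace ℝ (Fin m × Fin n)`
identifies the Frobenius inner product and norm with the Euclidean ones.
-/

open Matrix

open scoped RealInnerProductSpace

lemma nonneg_of_norm_sub_le_mul_norm_sub {E F : Type*} [NormedAddCommGroup E] [Nontrivial E]
    [SeminormedAddCommGroup F] {g : E → F} {M : ℝ} (hg : ∀ x y, ‖g x - g y‖ ≤ M * ‖x - y‖) :
    0 ≤ M := by
  obtain ⟨v, hv⟩ := exists_ne (0 : E)
  have h := (norm_nonneg _).trans (hg v 0)
  rw [sub_zero] at h
  exact nonneg_of_mul_nonneg_left h (norm_pos_iff.mpr hv)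

section InnerProductSpace

variable {E : Type*} [NormedAddCommGroup E] [InnerProductSpace ℝ E] {f : E → ℝ} {g : E → E}

lemma hasDerivAt_apply_add_smul (hf : ∀ x d, HasDerivAt (fun t : ℝ => f (x + t • d)) ⟪g x, d⟫ 0)
    (x d : E) (s : ℝ) : HasDerivAt (fun t : ℝ => f (x + t • d)) ⟪g (x + s • d), d⟫ s := by
  have h := HasDerivAt.comp_sub_const s s (sub_self s ▸ hf (x + s • d) d)
  simpa only [add_assoc, ← add_smul, add_sub_cancel] using h

theorem apply_add_le_of_lipschitz_gradient {M : ℝ}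
    (hf : ∀ x d, HasDerivAt (fun t : ℝ => f (x + t • d)) ⟪g x, d⟫ 0)
    (hg : ∀ x y, ‖g x - g y‖ ≤ M * ‖x - y‖) (x d : E) :
    f (x + d) ≤ f x + ⟪g x, d⟫ + M / 2 * ‖d‖ ^ 2 := by
  have hline := hasDerivAt_apply_add_smul hf x d
  have hbound : ∀ s ∈ Set.Ico (0 : ℝ) 1,
      ⟪g (x + s • d), d⟫ ≤ ⟪g x, d⟫ + 2 * s * (M / 2 * ‖d‖ ^ 2) := by
    intro s hs
    calc ⟪g (x + s • d), d⟫ = ⟪g x, d⟫ + ⟪g (x + s • d) - g x, d⟫ := by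
          rw [inner_sub_left]; ring
      _ ≤ ⟪g x, d⟫ + ‖g (x + s • d) - g x‖ * ‖d‖ := by
          gcongr; exact real_inner_le_norm _ _
      _ ≤ ⟪g x, d⟫ + M * ‖s • d‖ * ‖d‖ := by
          gcongr; simpa using hg (x + s • d) x
      _ = ⟪g x, d⟫ + 2 * s * (M / 2 * ‖d‖ ^ 2) := by
          rw [norm_smul, Real.norm_of_nonneg hs.1]; ring
  have hquad : ∀ s : ℝ, HasDerivAt (fun t : ℝ => f x + t * ⟪g x, d⟫ + t ^ 2 * (M / 2 * ‖d‖ ^ 2))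
      (⟪g x, d⟫ + 2 * s * (M / 2 * ‖d‖ ^ 2)) s := fun s =>
    ((((hasDerivAt_id' s).mul_const _).const_add _).add
      ((hasDerivAt_pow 2 s).mul_const _)).congr_deriv (by norm_num)
  have h := image_le_of_deriv_right_le_deriv_boundary
    (fun s _ => (hline s).continuousAt.continuousWithinAt) (fun s _ => (hline s).hasDerivWithinAt)
    (by simp) (fun s _ => (hquad s).continuousAt.continuousWithinAt)
    (fun s _ => (hquad s).hasDerivWithinAt) hbound (Set.right_mem_Icc.mpr zero_le_one)
  simpa using h

theorem polyak_lojasiewicz_of_strong_convexity {μ : ℝ} (hμ : 0 ≤ μ) {x y : E}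
    (hsc : f x + ⟪g x, y - x⟫ + μ / 2 * ‖y - x‖ ^ 2 ≤ f y) :
    2 * μ * (f x - f y) ≤ ‖g x‖ ^ 2 := by
  have hsq := norm_add_sq_real (g x) (μ • (y - x))
  rw [inner_smul_right, norm_smul, Real.norm_of_nonneg hμ] at hsq
  nlinarith [mul_le_mul_of_nonneg_left hsc (by linarith : 0 ≤ 2 * μ),
    norm_nonneg (g x + μ • (y - x))]

theorem apply_perturbed_gradient_step_le {M : ℝ}
    (hf : ∀ x d, HasDerivAt (fun t : ℝ => f (x + t • d)) ⟪g x, d⟫ 0)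
    (hg : ∀ x y, ‖g x - g y‖ ≤ M * ‖x - y‖) (hM : 0 ≤ M) {ε C h : ℝ} (hh : 0 ≤ h)
    (hstep : C * h ^ 2 + M / 2 * (2 * h + C * h ^ 2) ^ 2 ≤ h * (1 - ε) / 2) {x r e : E}
    (hr : ⟪r, g x⟫ ≤ ε * ‖g x‖ ^ 2) (hr_norm : ‖r‖ ≤ ‖g x‖) (he : ‖e‖ ≤ C * h ^ 2 * ‖g x‖) :
    f (x - h • g x + h • r + e) ≤ f x - h * (1 - ε) / 2 * ‖g x‖ ^ 2 := by
  set d := h • r + e - h • g x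
  have hinner : ⟪g x, d⟫ ≤ (ε * h + C * h ^ 2 - h) * ‖g x‖ ^ 2 := by
    have he_inner : ⟪g x, e⟫ ≤ ‖g x‖ * (C * h ^ 2 * ‖g x‖) :=
      (real_inner_le_norm _ _).trans (by gcongr)
    have hr_inner : h * ⟪g x, r⟫ ≤ h * (ε * ‖g x‖ ^ 2) := by
      rw [real_inner_comm]; gcongr
    rw [inner_sub_right, inner_add_right, real_inner_smul_right, real_inner_smul_right,
      real_inner_self_eq_norm_sq]
    linarith
  have hnorm : ‖d‖ ≤ (2 * h + C * h ^ 2) * ‖g x‖ :=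
    calc ‖d‖ ≤ ‖h • r‖ + ‖e‖ + ‖h • g x‖ :=
          (norm_sub_le _ _).trans (by gcongr; exact norm_add_le _ _)
      _ ≤ h * ‖g x‖ + C * h ^ 2 * ‖g x‖ + h * ‖g x‖ := by
          rw [norm_smul, norm_smul, Real.norm_of_nonneg hh]; gcongr
      _ = (2 * h + C * h ^ 2) * ‖g x‖ := by ring
  calc f (x - h • g x + h • r + e) = f (x + d) := by simp only [d]; abel_nf
    _ ≤ f x + ⟪g x, d⟫ + M / 2 * ‖d‖ ^ 2 := apply_add_le_of_lipschitz_gradient hf hg x d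
    _ ≤ f x + (ε * h + C * h ^ 2 - h) * ‖g x‖ ^ 2
          + M / 2 * ((2 * h + C * h ^ 2) * ‖g x‖) ^ 2 := by gcongr
    _ ≤ f x - h * (1 - ε) / 2 * ‖g x‖ ^ 2 := by
        linear_combination mul_le_mul_of_nonneg_right hstep (sq_nonneg ‖g x‖)

theorem perturbed_gradient_sub_le_geom {μ M : ℝ}
    (hf : ∀ x d, HasDerivAt (fun t : ℝ => f (x + t • d)) ⟪g x, d⟫ 0) (hμ : 0 ≤ μ)
    (hsc : ∀ x y, f y + ⟪g y, x - y⟫ + μ / 2 * ‖x - y‖ ^ 2 ≤ f x)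
    (hg : ∀ x y, ‖g x - g y‖ ≤ M * ‖x - y‖) (xstar : E) {ε C h : ℝ} (hε : ε < 1) (hh : 0 ≤ h)
    (hstep₁ : C * h ^ 2 + M / 2 * (2 * h + C * h ^ 2) ^ 2 ≤ h * (1 - ε) / 2)
    (hstep₂ : (1 - ε) * μ * h ≤ 1) (x r e : ℕ → E)
    (hx : ∀ t, x (t + 1) = x t - h • g (x t) + h • r t + e t)
    (hr : ∀ t, ⟪r t, g (x t)⟫ ≤ ε * ‖g (x t)‖ ^ 2) (hr_norm : ∀ t, ‖r t‖ ≤ ‖g (x t)‖)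
    (he : ∀ t, ‖e t‖ ≤ C * h ^ 2 * ‖g (x t)‖) (t : ℕ) :
    f (x t) - f xstar ≤ (1 - (1 - ε) * μ * h) ^ t * (f (x 0) - f xstar) := by
  rcases subsingleton_or_nontrivial E with hE | hE
  · simp [Subsingleton.elim (x t) xstar, Subsingleton.elim (x 0) xstar]
  refine le_geom (u := fun k => f (x k) - f xstar) (by linarith) t fun k _ => ?_
  have hdecrease := apply_perturbed_gradient_step_le hf hg
    (nonneg_of_norm_sub_le_mul_norm_sub hg) hh hstep₁ (hr k) (hr_norm k) (he k)
  have hpl := polyak_lojasiewicz_of_strong_convexity hμ (hsc xstar (x k))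
  rw [hx k]
  linarith [mul_le_mul_of_nonneg_left hpl (by nlinarith : 0 ≤ h * (1 - ε) / 2)]

end InnerProductSpace

noncomputable def Matrix.toEuclideanSpace (m n : ℕ) :
    Matrix (Fin m) (Fin n) ℝ ≃ₗ[ℝ] EuclideanSpace ℝ (Fin m × Fin n) :=
  (LinearEquiv.curry ℝ ℝ (Fin m) (Fin n)).symm ≪≫ₗ (WithLp.linearEquiv 2 ℝ _).symm

section Frobenius

variable {m n : ℕ}

@[simp]
lemma Matrix.toEuclideanSpace_apply (A : Matrix (Fin m) (Fin n) ℝ) (i : Fin m) (j : Fin n) :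
    Matrix.toEuclideanSpace m n A (i, j) = A i j := rfl

lemma frobInner_eq_inner (A B : Matrix (Fin m) (Fin n) ℝ) :
    frobInner A B = ⟪Matrix.toEuclideanSpace m n A, Matrix.toEuclideanSpace m n B⟫ := by
  simp [frobInner, PiLp.inner_apply, Fintype.sum_prod_type, mul_comm]

lemma frobNorm_eq_norm (A : Matrix (Fin m) (Fin n) ℝ) :
    frobNorm A = ‖Matrix.toEuclideanSpace m n A‖ := by
  simp [frobNorm, EuclideanSpace.norm_eq, Fintype.sum_prod_type]

end Frobenius

theorem perturbed_gradient_linear_convergence_general {m n : ℕ}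
    (L : Matrix (Fin m) (Fin n) ℝ → ℝ)
    (gradL : Matrix (Fin m) (Fin n) ℝ → Matrix (Fin m) (Fin n) ℝ)
    -- `gradL` is the gradient of the differentiable function `L`
    (hgrad : ∀ (W Δ : Matrix (Fin m) (Fin n) ℝ),
      HasDerivAt (fun t : ℝ => L (W + t • Δ)) (frobInner (gradL W) Δ) 0)
    (μ M : ℝ) (hμ : 0 < μ)
    -- μ-strong convexity of `L`
    (hsc : ∀ W W' : Matrix (Fin m) (Fin n) ℝ,
      L W' + frobInner (gradL W') (W - W') + μ / 2 * frobNorm (W - W') ^ 2 ≤ L W)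
    -- M-smoothness of `L`
    (hsmooth : ∀ W W' : Matrix (Fin m) (Fin n) ℝ,
      frobNorm (gradL W - gradL W') ≤ M * frobNorm (W - W'))
    (Wstar : Matrix (Fin m) (Fin n) ℝ)
    (ε : ℝ) (hε1 : ε < 1)
    (C₁ : ℝ) (h : ℝ) (hh : 0 < h)
    (hstep1 : C₁ * h ^ 2 + M / 2 * (2 * h + C₁ * h ^ 2) ^ 2 ≤ h * (1 - ε) / 2)
    (hstep2 : (1 - ε) * μ * h ≤ 1)
    (W : ℕ → Matrix (Fin m) (Fin n) ℝ)
    (R E : ℕ → Matrix (Fin m) (Fin n) ℝ)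
    (hupd : ∀ t, W (t + 1) = W t - h • gradL (W t) + h • R t + E t)
    (hR : ∀ t, frobInner (R t) (gradL (W t)) ≤ ε * frobNorm (gradL (W t)) ^ 2)
    (hRnorm : ∀ t, frobNorm (R t) ≤ frobNorm (gradL (W t)))
    (hE : ∀ t, frobNorm (E t) ≤ C₁ * h ^ 2 * frobNorm (gradL (W t))) :
    ∀ t : ℕ, L (W t) - L Wstar
      ≤ (1 - (1 - ε) * μ * h) ^ t * (L (W 0) - L Wstar) := by
  intro t
  let e := Matrix.toEuclideanSpace m n
  have key := perturbed_gradient_sub_le_geom (f := L ∘ e.symm) (g := e ∘ gradL ∘ e.symm)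
    (fun x d => by simpa [e, frobInner_eq_inner] using hgrad (e.symm x) (e.symm d)) hμ.le
    (fun x y => by
      simpa [e, frobInner_eq_inner, frobNorm_eq_norm] using hsc (e.symm x) (e.symm y))
    (fun x y => by simpa [e, frobNorm_eq_norm] using hsmooth (e.symm x) (e.symm y))
    (e Wstar) hε1 hh.le hstep1 hstep2 (e ∘ W) (e ∘ R) (e ∘ E) (fun t => by simp [hupd])
    (fun t => by simpa [e, frobInner_eq_inner, frobNorm_eq_norm] using hR t)
    (fun t => by simpa [e, frobNorm_eq_norm] using hRnorm t)
    (fun t => by simpa [e, frobNorm_eq_norm] using hE t) t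
  simpa using key

/-- Linear convergence in objective value of a perturbed gradient sequence
for a μ-strongly convex, M-smooth differentiable function. -/
theorem perturbed_gradient_linear_convergence {m n : ℕ}
    (L : Matrix (Fin m) (Fin n) ℝ → ℝ)
    (gradL : Matrix (Fin m) (Fin n) ℝ → Matrix (Fin m) (Fin n) ℝ)
    -- `gradL` is the gradient of the differentiable function `L`
    (hgrad : ∀ (W Δ : Matrix (Fin m) (Fin n) ℝ),
      HasDerivAt (fun t : ℝ => L (W + t • Δ)) (frobInner (gradL W) Δ) 0)
    (μ M : ℝ) (hμ : 0 < μ)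
    -- μ-strong convexity of `L`
    (hsc : ∀ W W' : Matrix (Fin m) (Fin n) ℝ,
      L W' + frobInner (gradL W') (W - W') + μ / 2 * frobNorm (W - W') ^ 2 ≤ L W)
    -- M-smoothness of `L`
    (hsmooth : ∀ W W' : Matrix (Fin m) (Fin n) ℝ,
      frobNorm (gradL W - gradL W') ≤ M * frobNorm (W - W'))
    (Wstar : Matrix (Fin m) (Fin n) ℝ) (hmin : ∀ W, L Wstar ≤ L W)
    (ε : ℝ) (hε0 : 0 ≤ ε) (hε1 : ε < 1)
    (C₁ : ℝ) (hC₁ : 0 ≤ C₁) (h : ℝ) (hh : 0 < h)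
    (hstep1 : C₁ * h ^ 2 + M / 2 * (2 * h + C₁ * h ^ 2) ^ 2 ≤ h * (1 - ε) / 2)
    (hstep2 : (1 - ε) * μ * h ≤ 1)
    (W : ℕ → Matrix (Fin m) (Fin n) ℝ)
    (R E : ℕ → Matrix (Fin m) (Fin n) ℝ)
    (hupd : ∀ t, W (t + 1) = W t - h • gradL (W t) + h • R t + E t)
    (hR : ∀ t, frobInner (R t) (gradL (W t)) ≤ ε * frobNorm (gradL (W t)) ^ 2)
    (hRnorm : ∀ t, frobNorm (R t) ≤ frobNorm (gradL (W t)))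
    (hE : ∀ t, frobNorm (E t) ≤ C₁ * h ^ 2 * frobNorm (gradL (W t))) :
    ∀ t : ℕ, L (W t) - L Wstar
      ≤ (1 - (1 - ε) * μ * h) ^ t * (L (W 0) - L Wstar) :=
  perturbed_gradient_linear_convergence_general L gradL hgrad μ M hμ hsc hsmooth Wstar ε hε1 C₁ h hh
    hstep1 hstep2 W R E hupd hR hRnorm hE
end

section
/- Let γ_min, γ_max > 0, L₀ ≥ 0, let A ∈ ℝ^{r×n} and B ∈ ℝ^{m×r} satisfy γ_min·I ⪯ AAᵀ ⪯ γ_max·I and γ_min·I ⪯ BᵀB ⪯ γ_max·I, and let G ∈ ℝ^{m×n} with ‖G‖_F ≤ L₀. Set H := AAᵀ + BᵀB. If X ∈ ℝ^{r×r} solves the Sylvester equation H·X + X·H = (BᵀB)⁻¹BᵀGAᵀ + AGᵀB(BᵀB)⁻¹, then ‖X‖_F ≤ L₀·√γ_max / (2·γ_min^{3/2}). -/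
/-!
Write `H = A Aᵀ + Bᵀ B ⪰ 2 γmin` and `W = (Bᵀ B)⁻¹ Bᵀ G`, so that the right-hand side is
`Y + Yᵀ` with `Y = W Aᵀ`. Pairing the equation with `X` in the trace inner product gives
`4 γmin ‖X‖² ≤ tr(Xᵀ (H X + X H)) = ⟨X, Y⟩ + ⟨X, Yᵀ⟩ ≤ 2 ‖X‖ ‖Y‖`. Next `‖W Aᵀ‖ ≤ √γmax ‖W‖`,
since the operator norm of `Aᵀ` is that of `A`. Finally `Bᵀ B W = Bᵀ G` gives
`‖B W‖² = ⟨B W, G⟩`, hence `‖B W‖ ≤ ‖G‖`, and `γmin ‖W‖² ≤ ‖B W‖²`.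
-/

open Matrix

section LoewnerBounds

variable {n : Type*} [Fintype n] [DecidableEq n]

theorem Matrix.PosSemidef.trace_mul_nonneg {P S : Matrix n n ℝ} (hP : P.PosSemidef)
    (hS : S.PosSemidef) : 0 ≤ (P * S).trace := by
  obtain ⟨C, rfl⟩ : ∃ C : Matrix n n ℝ, P = Cᴴ * C := by
    open scoped MatrixOrder in exact CStarAlgebra.nonneg_iff_eq_star_mul_self.mp hP.nonneg
  rw [Matrix.mul_assoc, trace_mul_comm]
  exact (hS.mul_mul_conjTranspose_same C).trace_nonneg

theorem trace_mul_le_of_posSemidef_smul_one_sub {P S : Matrix n n ℝ} {c : ℝ}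
    (hP : (c • 1 - P).PosSemidef) (hS : S.PosSemidef) : (P * S).trace ≤ c * S.trace := by
  have h := hP.trace_mul_nonneg hS
  rwa [Matrix.sub_mul, trace_sub, smul_mul, Matrix.one_mul, trace_smul, smul_eq_mul,
    sub_nonneg] at h

theorem le_trace_mul_of_posSemidef_sub_smul_one {P S : Matrix n n ℝ} {c : ℝ}
    (hP : (P - c • 1).PosSemidef) (hS : S.PosSemidef) : c * S.trace ≤ (P * S).trace := by
  have h := hP.trace_mul_nonneg hS
  rwa [Matrix.sub_mul, trace_sub, smul_mul, Matrix.one_mul, trace_smul, smul_eq_mul,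
    sub_nonneg] at h

end LoewnerBounds

theorem Matrix.PosSemidef.posDef_of_sub_smul_one {n : Type*} [DecidableEq n] {P : Matrix n n ℝ}
    {γ : ℝ} (hγ : 0 < γ) (hP : (P - γ • 1).PosSemidef) : P.PosDef := by
  simpa using PosDef.posSemidef_add hP (PosDef.one.smul hγ)

theorem Matrix.posSemidef_transpose_mul_self {m n : Type*} [Fintype m] [Finite n]
    (M : Matrix m n ℝ) : (Mᵀ * M).PosSemidef := by
  simpa using posSemidef_conjTranspose_mul_self M

theorem Matrix.posSemidef_self_mul_transpose {m n : Type*} [Finite m] [Fintype n]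
    (M : Matrix m n ℝ) : (M * Mᵀ).PosSemidef := by
  simpa using posSemidef_self_mul_conjTranspose M

theorem Matrix.trace_transpose_mul_eq_sum {m n : Type*} [Fintype m] [Fintype n]
    (M N : Matrix m n ℝ) : (Mᵀ * N).trace = ∑ p : m × n, M p.1 p.2 * N p.1 p.2 := by
  rw [Fintype.sum_prod_type, Finset.sum_comm]
  rfl

theorem le_of_sq_le_mul {x y : ℝ} (hy : 0 ≤ y) (h : x ^ 2 ≤ x * y) : x ≤ y := by
  nlinarith

theorem rpow_three_halves {x : ℝ} (hx : 0 < x) : x ^ ((3 : ℝ) / 2) = x * √x := by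
  rw [show (3 : ℝ) / 2 = 1 + 1 / 2 by norm_num, Real.rpow_add hx, Real.rpow_one,
    Real.sqrt_eq_rpow]

section FrobeniusNorm

variable {k m n : ℕ}

theorem frobNorm_eq_sqrt_sum (M : Matrix (Fin m) (Fin n) ℝ) :
    frobNorm M = √(∑ p : Fin m × Fin n, M p.1 p.2 ^ 2) := by
  rw [frobNorm, Fintype.sum_prod_type]

theorem frobNorm_nonneg (M : Matrix (Fin m) (Fin n) ℝ) : 0 ≤ frobNorm M :=
  Real.sqrt_nonneg _

theorem frobNorm_sq_eq_trace_transpose_mul (M : Matrix (Fin m) (Fin n) ℝ) :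
    frobNorm M ^ 2 = (Mᵀ * M).trace := by
  rw [frobNorm_eq_sqrt_sum, Real.sq_sqrt (by positivity), trace_transpose_mul_eq_sum]
  simp only [sq]

theorem frobNorm_sq_eq_trace_mul_transpose (M : Matrix (Fin m) (Fin n) ℝ) :
    frobNorm M ^ 2 = (M * Mᵀ).trace := by
  rw [frobNorm_sq_eq_trace_transpose_mul, trace_mul_comm]

theorem frobNorm_mul_sq_eq_trace (M : Matrix (Fin m) (Fin k) ℝ) (N : Matrix (Fin k) (Fin n) ℝ) :
    frobNorm (M * N) ^ 2 = (Mᵀ * M * (N * Nᵀ)).trace := by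
  rw [frobNorm_sq_eq_trace_transpose_mul, transpose_mul, Matrix.mul_assoc, trace_mul_comm,
    ← Matrix.mul_assoc Mᵀ, Matrix.mul_assoc (Mᵀ * M)]

theorem frobNorm_transpose (M : Matrix (Fin m) (Fin n) ℝ) : frobNorm Mᵀ = frobNorm M := by
  rw [frobNorm, frobNorm, Finset.sum_comm]
  rfl

theorem trace_transpose_mul_le_frobNorm_mul (M N : Matrix (Fin m) (Fin n) ℝ) :
    (Mᵀ * N).trace ≤ frobNorm M * frobNorm N := by
  rw [trace_transpose_mul_eq_sum, frobNorm_eq_sqrt_sum, frobNorm_eq_sqrt_sum]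
  exact Real.sum_mul_le_sqrt_mul_sqrt _ _ _

theorem frobNorm_mul_le_sqrt_mul {c : ℝ} {A : Matrix (Fin k) (Fin n) ℝ}
    (hA : (c • 1 - A * Aᵀ).PosSemidef) (Z : Matrix (Fin m) (Fin k) ℝ) :
    frobNorm (Z * A) ≤ √c * frobNorm Z := by
  have h : frobNorm (Z * A) ^ 2 ≤ c * frobNorm Z ^ 2 := by
    rw [frobNorm_mul_sq_eq_trace, frobNorm_sq_eq_trace_transpose_mul, trace_mul_comm]
    exact trace_mul_le_of_posSemidef_smul_one_sub hA (posSemidef_transpose_mul_self Z)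
  calc frobNorm (Z * A) = √(frobNorm (Z * A) ^ 2) := (Real.sqrt_sq (frobNorm_nonneg _)).symm
    _ ≤ √(c * frobNorm Z ^ 2) := Real.sqrt_le_sqrt h
    _ = √c * frobNorm Z := by
        rw [Real.sqrt_mul' c (by positivity), Real.sqrt_sq (frobNorm_nonneg _)]

-- `‖Z‖² = tr((Z A)ᵀ W) ≤ ‖Z A‖ ‖W‖` for `Z = W Aᵀ`, so the bound on `‖Z A‖` transfers to
-- `‖W Aᵀ‖`.
theorem frobNorm_mul_transpose_le_sqrt_mul {c : ℝ} {A : Matrix (Fin k) (Fin n) ℝ}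
    (hA : (c • 1 - A * Aᵀ).PosSemidef) (W : Matrix (Fin m) (Fin n) ℝ) :
    frobNorm (W * Aᵀ) ≤ √c * frobNorm W := by
  refine le_of_sq_le_mul (by positivity [frobNorm_nonneg W]) ?_
  calc frobNorm (W * Aᵀ) ^ 2 = ((W * Aᵀ * A)ᵀ * W).trace := by
        rw [frobNorm_sq_eq_trace_transpose_mul, transpose_mul (W * Aᵀ) A, Matrix.mul_assoc,
          trace_mul_comm Aᵀ, Matrix.mul_assoc]
    _ ≤ frobNorm (W * Aᵀ * A) * frobNorm W := trace_transpose_mul_le_frobNorm_mul _ _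
    _ ≤ √c * frobNorm (W * Aᵀ) * frobNorm W := by
        gcongr
        · exact frobNorm_nonneg _
        · exact frobNorm_mul_le_sqrt_mul hA _
    _ = frobNorm (W * Aᵀ) * (√c * frobNorm W) := by ring

theorem sqrt_mul_frobNorm_le_of_gram_mul_eq {γ : ℝ} {B : Matrix (Fin m) (Fin k) ℝ}
    (hB : (Bᵀ * B - γ • 1).PosSemidef) {W : Matrix (Fin k) (Fin n) ℝ}
    {G : Matrix (Fin m) (Fin n) ℝ} (hW : Bᵀ * B * W = Bᵀ * G) :
    √γ * frobNorm W ≤ frobNorm G := by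
  have hBW : frobNorm (B * W) ≤ frobNorm G := by
    refine le_of_sq_le_mul (frobNorm_nonneg G) ?_
    calc frobNorm (B * W) ^ 2 = ((B * W)ᵀ * G).trace := by
          rw [frobNorm_sq_eq_trace_transpose_mul, transpose_mul, Matrix.mul_assoc Wᵀ,
            Matrix.mul_assoc Wᵀ, ← Matrix.mul_assoc Bᵀ B W, hW]
      _ ≤ frobNorm (B * W) * frobNorm G := trace_transpose_mul_le_frobNorm_mul _ _
  have hγW : γ * frobNorm W ^ 2 ≤ frobNorm G ^ 2 := by
    refine le_trans ?_ (pow_le_pow_left₀ (frobNorm_nonneg _) hBW 2)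
    rw [frobNorm_mul_sq_eq_trace, frobNorm_sq_eq_trace_mul_transpose]
    exact le_trace_mul_of_posSemidef_sub_smul_one hB (posSemidef_self_mul_transpose W)
  calc √γ * frobNorm W = √(γ * frobNorm W ^ 2) := by
        rw [Real.sqrt_mul' γ (by positivity), Real.sqrt_sq (frobNorm_nonneg _)]
    _ ≤ √(frobNorm G ^ 2) := Real.sqrt_le_sqrt hγW
    _ = frobNorm G := Real.sqrt_sq (frobNorm_nonneg _)

theorem mul_frobNorm_le_of_sylvester_eq {μ : ℝ} {H X Y : Matrix (Fin k) (Fin k) ℝ}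
    (hH : (H - μ • 1).PosSemidef) (hX : H * X + X * H = Y + Yᵀ) :
    μ * frobNorm X ≤ frobNorm Y := by
  have hHX : μ * frobNorm X ^ 2 ≤ (Xᵀ * (H * X)).trace := by
    rw [frobNorm_sq_eq_trace_mul_transpose, trace_mul_comm Xᵀ, Matrix.mul_assoc]
    exact le_trace_mul_of_posSemidef_sub_smul_one hH (posSemidef_self_mul_transpose X)
  have hXH : μ * frobNorm X ^ 2 ≤ (Xᵀ * (X * H)).trace := by
    rw [frobNorm_sq_eq_trace_transpose_mul, ← Matrix.mul_assoc, trace_mul_comm (Xᵀ * X)]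
    exact le_trace_mul_of_posSemidef_sub_smul_one hH (posSemidef_transpose_mul_self X)
  have hsum : (Xᵀ * (H * X)).trace + (Xᵀ * (X * H)).trace
      = (Xᵀ * Y).trace + (Xᵀ * Yᵀ).trace := by
    rw [← trace_add, ← Matrix.mul_add, hX, Matrix.mul_add, trace_add]
  have hY := trace_transpose_mul_le_frobNorm_mul X Y
  have hYt := trace_transpose_mul_le_frobNorm_mul X Yᵀ
  rw [frobNorm_transpose] at hYt
  have key : frobNorm X * (μ * frobNorm X) ≤ frobNorm X * frobNorm Y := by linarith
  rcases (frobNorm_nonneg X).eq_or_lt with hX0 | hXpos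
  · rw [← hX0, mul_zero]
    exact frobNorm_nonneg Y
  · exact le_of_mul_le_mul_left key hXpos

end FrobeniusNorm

theorem sylvester_solution_bound_general {m n r : ℕ}
    (γmin γmax L₀ : ℝ) (hγmin : 0 < γmin)
    (A : Matrix (Fin r) (Fin n) ℝ) (B : Matrix (Fin m) (Fin r) ℝ)
    (hA1 : (A * Aᵀ - γmin • (1 : Matrix (Fin r) (Fin r) ℝ)).PosSemidef)
    (hA2 : (γmax • (1 : Matrix (Fin r) (Fin r) ℝ) - A * Aᵀ).PosSemidef)
    (hB1 : (Bᵀ * B - γmin • (1 : Matrix (Fin r) (Fin r) ℝ)).PosSemidef)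
    (G : Matrix (Fin m) (Fin n) ℝ) (hG : frobNorm G ≤ L₀)
    (X : Matrix (Fin r) (Fin r) ℝ)
    (hX : (A * Aᵀ + Bᵀ * B) * X + X * (A * Aᵀ + Bᵀ * B)
        = (Bᵀ * B)⁻¹ * Bᵀ * G * Aᵀ + A * Gᵀ * B * (Bᵀ * B)⁻¹) :
    frobNorm X ≤ L₀ * Real.sqrt γmax / (2 * γmin ^ ((3:ℝ)/2)) := by
  have hdet : IsUnit (Bᵀ * B).det := (hB1.posDef_of_sub_smul_one hγmin).det_pos.ne'.isUnit
  set W := (Bᵀ * B)⁻¹ * Bᵀ * G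
  have hH : (A * Aᵀ + Bᵀ * B - (2 * γmin) • 1).PosSemidef := by
    simpa only [two_mul, add_smul, add_sub_add_comm] using hA1.add hB1
  have hXW : (A * Aᵀ + Bᵀ * B) * X + X * (A * Aᵀ + Bᵀ * B) = W * Aᵀ + (W * Aᵀ)ᵀ := by
    simp only [hX, W, transpose_mul, transpose_transpose, transpose_nonsing_inv, Matrix.mul_assoc]
  have hX_le : 2 * γmin * frobNorm X ≤ √γmax * frobNorm W :=
    (mul_frobNorm_le_of_sylvester_eq hH hXW).trans (frobNorm_mul_transpose_le_sqrt_mul hA2 W)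
  have hW_le : √γmin * frobNorm W ≤ L₀ :=
    (sqrt_mul_frobNorm_le_of_gram_mul_eq hB1 (by
      simp only [W, Matrix.mul_assoc, mul_nonsing_inv_cancel_left _ _ hdet])).trans hG
  rw [rpow_three_halves hγmin, le_div_iff₀ (by positivity)]
  calc frobNorm X * (2 * (γmin * √γmin)) = √γmin * (2 * γmin * frobNorm X) := by ring
    _ ≤ √γmin * (√γmax * frobNorm W) := by gcongr
    _ = √γmax * (√γmin * frobNorm W) := by ring
    _ ≤ √γmax * L₀ := by gcongr
    _ = L₀ * √γmax := by ring

/-- Boundedness of the solution of the ODELoRA Sylvester equation under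
eigenvalue bounds on `A Aᵀ` and `Bᵀ B` and a gradient bound `‖G‖_F ≤ L₀`. -/
theorem sylvester_solution_bound {m n r : ℕ}
    (γmin γmax L₀ : ℝ) (hγmin : 0 < γmin) (hγmax : 0 < γmax) (hL₀ : 0 ≤ L₀)
    (A : Matrix (Fin r) (Fin n) ℝ) (B : Matrix (Fin m) (Fin r) ℝ)
    (hA1 : (A * Aᵀ - γmin • (1 : Matrix (Fin r) (Fin r) ℝ)).PosSemidef)
    (hA2 : (γmax • (1 : Matrix (Fin r) (Fin r) ℝ) - A * Aᵀ).PosSemidef)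
    (hB1 : (Bᵀ * B - γmin • (1 : Matrix (Fin r) (Fin r) ℝ)).PosSemidef)
    (hB2 : (γmax • (1 : Matrix (Fin r) (Fin r) ℝ) - Bᵀ * B).PosSemidef)
    (G : Matrix (Fin m) (Fin n) ℝ) (hG : frobNorm G ≤ L₀)
    (X : Matrix (Fin r) (Fin r) ℝ)
    (hX : (A * Aᵀ + Bᵀ * B) * X + X * (A * Aᵀ + Bᵀ * B)
        = (Bᵀ * B)⁻¹ * Bᵀ * G * Aᵀ + A * Gᵀ * B * (Bᵀ * B)⁻¹) :
    frobNorm X ≤ L₀ * Real.sqrt γmax / (2 * γmin ^ ((3:ℝ)/2)) :=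
  sylvester_solution_bound_general γmin γmax L₀ hγmin A B hA1 hA2 hB1 G hG X hX
end
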